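/- Consider a primitive hidden stochastic game: for every $\varepsilon > 0$ there exists $m_\varepsilon$ such that $\tau_p(T(h_{m_\varepsilon})) \le \varepsilon$ for all histories $h_{m_\varepsilon}$, where $\tau_p$ is Birkhoff's coefficient and beliefs contract as $\| b^{b}_{h} - b^{b'}_{h} \|_1 \le \tau_p(T(h))$ for any two initial beliefs $b, b'$. Then the game satisfies the Doeblin condition: for every $\varepsilon > 0$ there exist $m_\varepsilon \in \mathbb{N}^*$ and $\delta_\varepsilon > 0$ such that for all strategy pairs $(\sigma, \tau)$ there exists $\bar b \in \Delta(\mathcal{K})$ such that for all initial beliefs $b$, $\mathbb{P}^b_{\sigma,\tau}(\|B_{m_\varepsilon} - \bar b\|_1 \le \varepsilon) \ge \delta_\varepsilon$. -/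

import Mathlib

open scoped Classical

/-- `ψ(P) = min_{k,k̄,k',k''} (P k k' * P k̄ k'') / (P k̄ k' * P k k'')`. -/
noncomputable def psiCoef {K : Type*} [Fintype K] [Nonempty K] (P : K → K → ℝ) : ℝ :=
  Finset.univ.inf' Finset.univ_nonempty
    (fun q : (K × K) × K × K =>
      P q.1.1 q.2.1 * P q.1.2 q.2.2 / (P q.1.2 q.2.1 * P q.1.1 q.2.2))

/-- Birkhoff's contraction coefficient. -/
noncomputable def taup {K : Type*} [Fintype K] [Nonempty K] (P : K → K → ℝ) : ℝ :=
  if ∀ k k', 0 < P k k' then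
    (1 - Real.sqrt (psiCoef P)) / (1 + Real.sqrt (psiCoef P))
  else 1
/-- Forward product of transition-signal matrices along a history:
`T(h) = P(i₁,j₁,s₂) ⋯ P(i_{m-1},j_{m-1},s_m)`. -/
noncomputable def Tmat {K A : Type*} [Fintype K] [DecidableEq K]
    (P : A → K → K → ℝ) : List A → K → K → ℝ
  | [] => fun k k' => if k = k' then 1 else 0
  | a :: l => fun k k' => ∑ j, P a k j * Tmat P l j k'

/-- Probability weight that the behavior strategies `σ` and `τ` play the actions prescribed by
a given history (continuing from the history `past`): `∏_r σ(h_r)(i_r) τ(h_r)(j_r)`. -/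
noncomputable def stratW {I J S : Type*}
    (σ : List (I × J × S) → I → ℝ) (τ : List (I × J × S) → J → ℝ) :
    List (I × J × S) → List (I × J × S) → ℝ
  | _, [] => 1
  | past, a :: rest => σ past a.1 * τ past a.2.1 * stratW σ τ (past ++ [a]) rest

/-- Probability that the history `h` occurs under strategies `(σ, τ)` from the initial belief
`b`: `(∏_r σ(h_r)(i_r) τ(h_r)(j_r)) ⋅ bᵀ T(h) 𝟙`. -/
noncomputable def histProb {K I J S : Type*} [Fintype K] [DecidableEq K]
    (P : I × J × S → K → K → ℝ)
    (σ : List (I × J × S) → I → ℝ) (τ : List (I × J × S) → J → ℝ)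
    (b : K → ℝ) (h : List (I × J × S)) : ℝ :=
  stratW σ τ [] h * ∑ k, ∑ k', b k * Tmat P h k k'

/-- Posterior belief after the history `h` from the prior `b`:
`b^b_h(k') = (bᵀ T(h))_{k'} / (bᵀ T(h) 𝟙)`. -/
noncomputable def post {K I J S : Type*} [Fintype K] [DecidableEq K]
    (P : I × J × S → K → K → ℝ) (b : K → ℝ) (h : List (I × J × S)) (k' : K) : ℝ :=
  (∑ k, b k * Tmat P h k k') / (∑ k, ∑ k'', b k * Tmat P h k k'')


section Aux

lemma Tmat_nonneg {K A : Type*} [Fintype K] [DecidableEq K]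
    (P : A → K → K → ℝ) (hP : ∀ a k k', 0 ≤ P a k k') :
    ∀ (h : List A) (k k' : K), 0 ≤ Tmat P h k k' := by
  intro h
  induction h with
  | nil => intro k k'; simp only [Tmat]; split <;> norm_num
  | cons a l ih =>
      intro k k'
      simp only [Tmat]
      exact Finset.sum_nonneg fun j _ => mul_nonneg (hP a k j) (ih j k')

noncomputable def pick {I : Type*} [Fintype I] [Nonempty I] (f : I → ℝ) : I :=
  Classical.choose (Finset.exists_max_image Finset.univ f Finset.univ_nonempty)

lemma pick_ge {I : Type*} [Fintype I] [Nonempty I] (f : I → ℝ)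
    (hsum : ∑ i, f i = 1) : (Fintype.card I : ℝ)⁻¹ ≤ f (pick f) := by
  obtain ⟨-, hmax⟩ :=
    Classical.choose_spec (Finset.exists_max_image Finset.univ f Finset.univ_nonempty)
  have hcard : (0:ℝ) < (Fintype.card I : ℝ) := by
    exact_mod_cast Fintype.card_pos
  rw [inv_le_iff_one_le_mul₀ hcard, mul_comm]
  calc (1:ℝ) = ∑ i, f i := hsum.symm
    _ ≤ ∑ _i : I, f (pick f) := Finset.sum_le_sum fun i _ => hmax i (Finset.mem_univ i)
    _ = (Fintype.card I : ℝ) * f (pick f) := by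
        simp [Finset.sum_const, Finset.card_univ, mul_comm]

noncomputable def hstar {I J S : Type*} [Fintype I] [Nonempty I] [Fintype J] [Nonempty J]
    (σ : List (I × J × S) → I → ℝ) (τ : List (I × J × S) → J → ℝ) (s₀ : S) :
    ℕ → List (I × J × S) → List (I × J × S)
  | 0, _ => []
  | n+1, past =>
      (pick (σ past), pick (τ past), s₀) ::
        hstar σ τ s₀ n (past ++ [(pick (σ past), pick (τ past), s₀)])

lemma hstar_length {I J S : Type*} [Fintype I] [Nonempty I] [Fintype J] [Nonempty J]
    (σ : List (I × J × S) → I → ℝ) (τ : List (I × J × S) → J → ℝ) (s₀ : S) :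
    ∀ (n : ℕ) (past : List (I × J × S)), (hstar σ τ s₀ n past).length = n := by
  intro n
  induction n with
  | zero => intro past; simp [hstar]
  | succ n ih => intro past; simp [hstar, ih]

lemma stratW_nonneg {I J S : Type*}
    (σ : List (I × J × S) → I → ℝ) (τ : List (I × J × S) → J → ℝ)
    (hσ : ∀ h i, 0 ≤ σ h i) (hτ : ∀ h j, 0 ≤ τ h j) :
    ∀ (h past : List (I × J × S)), 0 ≤ stratW σ τ past h := by
  intro h
  induction h with
  | nil => intro past; simp [stratW]
  | cons a rest ih =>
      intro past
      simp only [stratW]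
      exact mul_nonneg (mul_nonneg (hσ _ _) (hτ _ _)) (ih _)

lemma stratW_hstar_ge {I J S : Type*} [Fintype I] [Nonempty I] [Fintype J] [Nonempty J]
    (σ : List (I × J × S) → I → ℝ) (τ : List (I × J × S) → J → ℝ) (s₀ : S)
    (hσ : ∀ h, (∀ i, 0 ≤ σ h i) ∧ ∑ i, σ h i = 1)
    (hτ : ∀ h, (∀ j, 0 ≤ τ h j) ∧ ∑ j, τ h j = 1) :
    ∀ (n : ℕ) (past : List (I × J × S)),
      ((Fintype.card I : ℝ) * (Fintype.card J : ℝ))⁻¹ ^ n ≤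
        stratW σ τ past (hstar σ τ s₀ n past) := by
  have hI : (0:ℝ) < (Fintype.card I : ℝ) := by exact_mod_cast Fintype.card_pos
  have hJ : (0:ℝ) < (Fintype.card J : ℝ) := by exact_mod_cast Fintype.card_pos
  intro n
  induction n with
  | zero => intro past; simp [hstar, stratW]
  | succ n ih =>
      intro past
      simp only [hstar, stratW, pow_succ]
      have h1 : (Fintype.card I : ℝ)⁻¹ ≤ σ past (pick (σ past)) :=
        pick_ge (σ past) (hσ past).2
      have h2 : (Fintype.card J : ℝ)⁻¹ ≤ τ past (pick (τ past)) :=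
        pick_ge (τ past) (hτ past).2
      have key : ((Fintype.card I : ℝ) * (Fintype.card J : ℝ))⁻¹ ≤
          σ past (pick (σ past)) * τ past (pick (τ past)) := by
        rw [mul_inv]
        exact mul_le_mul h1 h2 (by positivity) ((hσ past).1 _)
      calc ((Fintype.card I : ℝ) * (Fintype.card J : ℝ))⁻¹ ^ n *
            ((Fintype.card I : ℝ) * (Fintype.card J : ℝ))⁻¹
          ≤ stratW σ τ (past ++ [(pick (σ past), pick (τ past), s₀)])
              (hstar σ τ s₀ n (past ++ [(pick (σ past), pick (τ past), s₀)])) *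
            (σ past (pick (σ past)) * τ past (pick (τ past))) := by
            apply mul_le_mul (ih _) key (by positivity)
            exact stratW_nonneg σ τ (fun h => (hσ h).1) (fun h => (hτ h).1) _ _
        _ = _ := by ring

end Aux

/-- Primitive hidden stochastic games satisfy the Doeblin condition. -/
theorem stmt_16 {K I J S : Type*} [Fintype K] [DecidableEq K] [Nonempty K]
    [Fintype I] [Nonempty I] [Fintype J] [Nonempty J] [Fintype S] [Nonempty S]
    (P : I × J × S → K → K → ℝ) (hP : ∀ a k k', 0 ≤ P a k k')
    (hstoc : ∀ (i : I) (j : J) (k : K), ∑ s : S, ∑ k', P (i, j, s) k k' = 1)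
    (hcontr : ∀ (h : List (I × J × S)) (b b' : K → ℝ),
      (∀ k, 0 ≤ b k) → ∑ k, b k = 1 → (∀ k, 0 ≤ b' k) → ∑ k, b' k = 1 →
      0 < (∑ k, ∑ k', b k * Tmat P h k k') → 0 < (∑ k, ∑ k', b' k * Tmat P h k k') →
      ∑ k', |post P b h k' - post P b' h k'| ≤ taup (Tmat P h))
    (hprim : ∀ ε : ℝ, 0 < ε → ∃ m : ℕ, 1 ≤ m ∧
      ∀ h : List (I × J × S), h.length = m - 1 → taup (Tmat P h) ≤ ε) :
    ∀ ε : ℝ, 0 < ε → ∃ m : ℕ, 1 ≤ m ∧ ∃ δ : ℝ, 0 < δ ∧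
      ∀ (σ : List (I × J × S) → I → ℝ) (τ : List (I × J × S) → J → ℝ),
        (∀ h, (∀ i, 0 ≤ σ h i) ∧ ∑ i, σ h i = 1) →
        (∀ h, (∀ j, 0 ≤ τ h j) ∧ ∑ j, τ h j = 1) →
        ∃ bbar : K → ℝ, (∀ k, 0 ≤ bbar k) ∧ (∑ k, bbar k = 1) ∧
          ∀ b : K → ℝ, (∀ k, 0 ≤ b k) → ∑ k, b k = 1 →
            δ ≤ ∑ a : Fin (m - 1) → I × J × S,
              if ∑ k, |post P b (List.ofFn a) k - bbar k| ≤ ε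
              then histProb P σ τ b (List.ofFn a) else 0 := by
  intro ε hε
  have hε' : (0:ℝ) < min ε 2⁻¹ := lt_min hε (by norm_num)
  obtain ⟨m, hm1, hm⟩ := hprim (min ε 2⁻¹) hε'
  refine ⟨m, hm1, ?_⟩
  -- all entries of Tmat along length-(m-1) histories are positive
  have hpos : ∀ h : List (I × J × S), h.length = m - 1 → ∀ k k', 0 < Tmat P h k k' := by
    intro h hl
    by_contra hc
    have h1 : taup (Tmat P h) = 1 := by rw [taup, if_neg hc]
    have h2 := hm h hl
    rw [h1] at h2
    have := min_le_right ε (2⁻¹ : ℝ)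
    linarith
  -- minimal row sum over all histories of length m-1
  set μ : ℝ := Finset.univ.inf' Finset.univ_nonempty
    (fun p : (Fin (m - 1) → I × J × S) × K =>
      ∑ k', Tmat P (List.ofFn p.1) p.2 k') with hμdef
  have hμpos : 0 < μ := by
    rw [hμdef, Finset.lt_inf'_iff]
    intro p _
    exact Finset.sum_pos (fun k' _ => hpos _ (List.length_ofFn (f := p.1)) p.2 k')
      Finset.univ_nonempty
  have hμle : ∀ (a : Fin (m - 1) → I × J × S) (k : K),
      μ ≤ ∑ k', Tmat P (List.ofFn a) k k' := fun a k =>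
    Finset.inf'_le _ (Finset.mem_univ (a, k))
  have hIJ : (0:ℝ) < (Fintype.card I : ℝ) * (Fintype.card J : ℝ) := by
    have hI : (0:ℝ) < (Fintype.card I : ℝ) := by exact_mod_cast Fintype.card_pos
    have hJ : (0:ℝ) < (Fintype.card J : ℝ) := by exact_mod_cast Fintype.card_pos
    positivity
  refine ⟨((Fintype.card I : ℝ) * (Fintype.card J : ℝ))⁻¹ ^ (m - 1) * μ,
    by positivity, ?_⟩
  intro σ τ hσ hτ
  set s₀ : S := Classical.arbitrary S
  set hh : List (I × J × S) := hstar σ τ s₀ (m - 1) [] with hhdef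
  have hlen : hh.length = m - 1 := hstar_length σ τ s₀ (m - 1) []
  -- the history as a function on Fin (m-1)
  set astar : Fin (m - 1) → I × J × S := fun i => hh.get (Fin.cast hlen.symm i) with hadef
  have hofn : List.ofFn astar = hh := by
    apply List.ext_getElem
    · simp [hlen]
    · intro i h1 h2
      simp [hadef]
  -- lower bound on denominators
  have hden : ∀ b : K → ℝ, (∀ k, 0 ≤ b k) → (∑ k, b k = 1) →
      μ ≤ ∑ k, ∑ k', b k * Tmat P hh k k' := by
    intro b hb hbsum
    calc μ = ∑ k, b k * μ := by
          rw [← Finset.sum_mul, hbsum, one_mul]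
      _ ≤ ∑ k, b k * ∑ k', Tmat P hh k k' := by
          refine Finset.sum_le_sum fun k _ => mul_le_mul_of_nonneg_left ?_ (hb k)
          rw [← hofn]; exact hμle astar k
      _ = ∑ k, ∑ k', b k * Tmat P hh k k' := by
          simp [Finset.mul_sum]
  -- uniform prior
  set u : K → ℝ := fun _ => (Fintype.card K : ℝ)⁻¹ with hudef
  have hK : (0:ℝ) < (Fintype.card K : ℝ) := by exact_mod_cast Fintype.card_pos
  have hu0 : ∀ k, 0 ≤ u k := fun k => by rw [hudef]; positivity
  have husum : ∑ k, u k = 1 := by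
    simp [hudef, Finset.sum_const, Finset.card_univ]
  have hdenu : 0 < ∑ k, ∑ k', u k * Tmat P hh k k' :=
    lt_of_lt_of_le hμpos (hden u hu0 husum)
  refine ⟨post P u hh, ?_, ?_, ?_⟩
  · intro k
    exact div_nonneg (Finset.sum_nonneg fun k' _ =>
        mul_nonneg (hu0 k') (Tmat_nonneg P hP hh k' k))
      (le_of_lt hdenu)
  · unfold post
    rw [← Finset.sum_div]
    rw [Finset.sum_comm]
    exact div_self (ne_of_gt hdenu)
  · intro b hb hbsum
    have hdenb : 0 < ∑ k, ∑ k', b k * Tmat P hh k k' :=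
      lt_of_lt_of_le hμpos (hden b hb hbsum)
    have hcond : ∑ k, |post P b (List.ofFn astar) k - post P u hh k| ≤ ε := by
      rw [hofn]
      calc ∑ k, |post P b hh k - post P u hh k| ≤ taup (Tmat P hh) :=
            hcontr hh b u hb hbsum hu0 husum hdenb hdenu
        _ ≤ min ε 2⁻¹ := hm hh hlen
        _ ≤ ε := min_le_left _ _
    calc ((Fintype.card I : ℝ) * (Fintype.card J : ℝ))⁻¹ ^ (m - 1) * μ
        ≤ stratW σ τ [] hh * ∑ k, ∑ k', b k * Tmat P hh k k' := by
          refine mul_le_mul (stratW_hstar_ge σ τ s₀ hσ hτ (m - 1) [])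
            (hden b hb hbsum) (le_of_lt hμpos) ?_
          exact stratW_nonneg σ τ (fun h => (hσ h).1) (fun h => (hτ h).1) _ _
      _ = histProb P σ τ b (List.ofFn astar) := by rw [hofn]; rfl
      _ = if ∑ k, |post P b (List.ofFn astar) k - post P u hh k| ≤ ε
            then histProb P σ τ b (List.ofFn astar) else 0 := by rw [if_pos hcond]
      _ ≤ ∑ a : Fin (m - 1) → I × J × S,
            if ∑ k, |post P b (List.ofFn a) k - post P u hh k| ≤ ε
            then histProb P σ τ b (List.ofFn a) else 0 := by
          refine Finset.single_le_sum (f := fun a =>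
            if ∑ k, |post P b (List.ofFn a) k - post P u hh k| ≤ ε
            then histProb P σ τ b (List.ofFn a) else 0) (fun a _ => ?_)
            (Finset.mem_univ astar)
          split
          · exact mul_nonneg
              (stratW_nonneg σ τ (fun h => (hσ h).1) (fun h => (hτ h).1) _ _)
              (Finset.sum_nonneg fun k _ => Finset.sum_nonneg fun k' _ =>
                mul_nonneg (hb k) (Tmat_nonneg P hP _ k k'))
          · exact le_refl 0
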